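/- arXiv:1203.3168 — 2 statements merged into one kernel-verified Lean document; each statement's English description precedes it below -/
import Mathlib

section
/- For a generic (2n+1)×(2n+1) skew-symmetric matrix φ over a commutative ring, the vector Y = (Y_1, ..., Y_{2n+1}) with Y_i = (-1)^{i+1} Pf(φ(i)), where φ(i) is obtained by deleting the i-th row and column, satisfies φ · Y = 0. -/
/-!
Summing the terms of `pfaffian A` over all permutations of `Fin (2n)` instead of `pfPerms n`
counts each term once for every element of the hyperoctahedral group `B_n` (reorder the pairs,
flip pairs): `B_n` acts freely on the right, each orbit meets `pfPerms n` exactly once, and for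
alternating `A` the signed term is constant on orbits. Hence `|B_n| • (φ Y)_j` is the signed
sum, over all permutations `π` of `Fin (2n+1)`, of `φ j (π 0)` times the pair product of
`π ∘ succ`. These terms cancel in pairs: if `π p = j`, exchanging `π 0` with the value of `π`
at the partner of `p` flips the sign and, by alternation, keeps the rest; if `π 0 = j` the term
has the factor `φ j j = 0`. The factor `|B_n|` can be cancelled for the generic alternating
matrix over `ℤ[x_ij]`, and every alternating matrix with zero diagonal is a specialization of it.
-/

open Finset in
/-- The set of permutations of `Fin (2*n)` giving normalized perfect matchings. -/
noncomputable def pfPerms (n : ℕ) : Finset (Equiv.Perm (Fin (2*n))) :=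
  Finset.univ.filter (fun σ =>
    (∀ i : Fin n, σ ⟨2*i, by omega⟩ < σ ⟨2*i+1, by omega⟩) ∧
    (∀ i j : Fin n, i < j → σ ⟨2*(i:ℕ), by omega⟩ < σ ⟨2*(j:ℕ), by omega⟩))

/-- The Pfaffian of a `2n × 2n` matrix, as the signed sum over perfect matchings. -/
noncomputable def pfaffian {R : Type*} [CommRing R] {n : ℕ}
    (A : Matrix (Fin (2*n)) (Fin (2*n)) R) : R :=
  ∑ σ ∈ pfPerms n, (Equiv.Perm.sign σ : ℤ) •
    ∏ i : Fin n, A (σ ⟨2*i, by omega⟩) (σ ⟨2*i+1, by omega⟩)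

open Equiv Equiv.Perm Finset

section

variable {n N : ℕ} {α β R S : Type*} [CommRing R] [CommRing S]

def finPairEquiv (n : ℕ) : Fin n × Bool ≃ Fin (2 * n) :=
  ((Equiv.refl _).prodCongr finTwoEquiv.symm).trans
    (finProdFinEquiv.trans (finCongr (mul_comm n 2)))

lemma finPairEquiv_eq_mk (t : Fin n) (b : Bool) :
    finPairEquiv n (t, b) = ⟨2 * t + b.toNat, by have := t.2; have := b.toNat_le; omega⟩ :=
  Fin.ext (by cases b <;> simp [finPairEquiv, finProdFinEquiv, finTwoEquiv, add_comm])

lemma Equiv.Perm.ext_finPairEquiv {f g : Perm (Fin (2 * n))}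
    (h : ∀ t b, f (finPairEquiv n (t, b)) = g (finPairEquiv n (t, b))) : f = g :=
  Equiv.ext fun x => by
    obtain ⟨⟨t, b⟩, rfl⟩ := (finPairEquiv n).surjective x
    exact h t b

lemma Equiv.Perm.bool_eq_one_or_eq_swap (κ : Perm Bool) : κ = 1 ∨ κ = swap false true := by
  revert κ; decide

def pairProd (A : Matrix α α R) (g : Fin (2 * n) → α) : R :=
  ∏ t, A (g (finPairEquiv n (t, false))) (g (finPairEquiv n (t, true)))

def signedPairProd (A : Matrix (Fin (2 * n)) (Fin (2 * n)) R) (f : Perm (Fin (2 * n))) : R :=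
  (sign f : ℤ) • pairProd A f

lemma pairProd_submatrix (A : Matrix α α R) (e : β → α) (g : Fin (2 * n) → β) :
    pairProd (A.submatrix e e) g = pairProd A (e ∘ g) :=
  rfl

lemma pfaffian_eq_sum_signedPairProd (A : Matrix (Fin (2 * n)) (Fin (2 * n)) R) :
    pfaffian A = ∑ σ ∈ pfPerms n, signedPairProd A σ := by
  simp [pfaffian, signedPairProd, pairProd, finPairEquiv_eq_mk]

lemma apply_perm_bool_eq_sign_smul {A : Matrix α α R} (hA : ∀ x y, A y x = -A x y)
    (κ : Perm Bool) (x : Bool → α) :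
    A (x (κ false)) (x (κ true)) = (sign κ : ℤ) • A (x false) (x true) := by
  obtain rfl | rfl := κ.bool_eq_one_or_eq_swap
  · simp
  · simp [hA (x false)]

def pairPerm (τ : Perm (Fin n)) (κ : Fin n → Perm Bool) : Perm (Fin (2 * n)) :=
  (finPairEquiv n).permCongr (prodShear τ κ)

@[simp] lemma pairPerm_apply (τ : Perm (Fin n)) (κ : Fin n → Perm Bool) (t : Fin n) (b : Bool) :
    pairPerm τ κ (finPairEquiv n (t, b)) = finPairEquiv n (τ t, κ t b) := by
  simp [pairPerm]

lemma sign_pairPerm (τ : Perm (Fin n)) (κ : Fin n → Perm Bool) :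
    sign (pairPerm τ κ) = ∏ t, sign (κ t) := by
  have : prodShear τ κ = prodCongrLeft (fun _ => τ) * prodCongrRight κ := by
    ext ⟨t, b⟩ <;> rfl
  rw [pairPerm, sign_permCongr, this, map_mul, sign_prodCongrLeft, sign_prodCongrRight,
    Fintype.prod_bool, Int.units_mul_self, one_mul]

lemma pairPerm_one : pairPerm (1 : Perm (Fin n)) 1 = 1 :=
  ext_finPairEquiv fun t b => by simp

lemma pairPerm_mul (τ τ' : Perm (Fin n)) (κ κ' : Fin n → Perm Bool) :
    pairPerm τ κ * pairPerm τ' κ' = pairPerm (τ * τ') fun t => κ (τ' t) * κ' t :=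
  ext_finPairEquiv fun t b => by simp

lemma pairPerm_inv (τ : Perm (Fin n)) (κ : Fin n → Perm Bool) :
    (pairPerm τ κ)⁻¹ = pairPerm τ⁻¹ fun s => (κ (τ⁻¹ s))⁻¹ :=
  (eq_inv_of_mul_eq_one_left (ext_finPairEquiv fun t b => by simp)).symm

def hyperoctahedral (n : ℕ) : Subgroup (Perm (Fin (2 * n))) where
  carrier := {g | ∃ τ κ, pairPerm τ κ = g}
  mul_mem' := by
    rintro _ _ ⟨τ, κ, rfl⟩ ⟨τ', κ', rfl⟩
    exact ⟨_, _, (pairPerm_mul τ τ' κ κ').symm⟩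
  one_mem' := ⟨1, 1, pairPerm_one⟩
  inv_mem' := by
    rintro _ ⟨τ, κ, rfl⟩
    exact ⟨_, _, (pairPerm_inv τ κ).symm⟩

lemma pairProd_comp_pairPerm {A : Matrix α α R} (hA : ∀ x y, A y x = -A x y)
    (g : Fin (2 * n) → α) (τ : Perm (Fin n)) (κ : Fin n → Perm Bool) :
    pairProd A (g ∘ pairPerm τ κ) = ((∏ t, sign (κ t) : ℤˣ) : ℤ) • pairProd A g := by
  have hpair (t : Fin n) :
      A (g (finPairEquiv n (τ t, κ t false))) (g (finPairEquiv n (τ t, κ t true)))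
        = (sign (κ t) : ℤ) •
          A (g (finPairEquiv n (τ t, false))) (g (finPairEquiv n (τ t, true))) :=
    apply_perm_bool_eq_sign_smul hA (κ t) fun b => g (finPairEquiv n (τ t, b))
  simp only [pairProd, Function.comp_apply, pairPerm_apply, hpair, zsmul_eq_mul, prod_mul_distrib,
    Equiv.prod_comp τ fun s => A (g (finPairEquiv n (s, false))) (g (finPairEquiv n (s, true))),
    Units.coe_prod, Int.cast_prod]

lemma signedPairProd_mul_of_mem {A : Matrix (Fin (2 * n)) (Fin (2 * n)) R}
    (hA : ∀ x y, A y x = -A x y) (f : Perm (Fin (2 * n))) {g : Perm (Fin (2 * n))}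
    (hg : g ∈ hyperoctahedral n) : signedPairProd A (f * g) = signedPairProd A f := by
  obtain ⟨τ, κ, rfl⟩ := hg
  rw [signedPairProd, Perm.coe_mul, pairProd_comp_pairPerm hA, map_mul, sign_pairPerm, smul_smul,
    ← Units.val_mul, mul_assoc, Int.units_mul_self, mul_one, signedPairProd]

lemma mem_pfPerms_iff {σ : Perm (Fin (2 * n))} :
    σ ∈ pfPerms n ↔ (∀ t, σ (finPairEquiv n (t, false)) < σ (finPairEquiv n (t, true))) ∧
      StrictMono fun t => σ (finPairEquiv n (t, false)) := by
  simp [pfPerms, finPairEquiv_eq_mk, StrictMono]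

lemma eq_one_of_mem_pfPerms_of_mul_mem {σ g : Perm (Fin (2 * n))} (hσ : σ ∈ pfPerms n)
    (hg : g ∈ hyperoctahedral n) (hσg : σ * g ∈ pfPerms n) : g = 1 := by
  obtain ⟨τ, κ, rfl⟩ := hg
  rw [mem_pfPerms_iff] at hσ hσg
  simp only [Perm.coe_mul, Function.comp_apply, pairPerm_apply] at hσg
  have hκ (t : Fin n) : κ t = 1 := by
    refine (κ t).bool_eq_one_or_eq_swap.resolve_right fun h => ?_
    have := hσg.1 t
    simp only [h, swap_apply_left, swap_apply_right] at this
    exact asymm this (hσ.1 (τ t))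
  have hτ : StrictMono τ := fun s s' hss' => hσ.2.lt_iff_lt.mp (by simpa [hκ] using hσg.2 hss')
  rw [show τ = 1 from Equiv.ext (congrFun hτ.eq_id), show κ = 1 from funext hκ, pairPerm_one]

def pairOrient (f : Perm (Fin (2 * n))) (t : Fin n) : Perm Bool :=
  if f (finPairEquiv n (t, false)) < f (finPairEquiv n (t, true)) then 1 else swap false true

lemma apply_pairOrient_lt (f : Perm (Fin (2 * n))) (t : Fin n) :
    f (finPairEquiv n (t, pairOrient f t false))
      < f (finPairEquiv n (t, pairOrient f t true)) := by
  unfold pairOrient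
  split_ifs with h
  · exact h
  · refine lt_of_le_of_ne (not_lt.mp h) (f.injective.ne ?_)
    simp

lemma exists_mul_mem_pfPerms (f : Perm (Fin (2 * n))) :
    ∃ g ∈ hyperoctahedral n, f * g ∈ pfPerms n := by
  set m : Fin n → Fin (2 * n) := fun t => f (finPairEquiv n (t, pairOrient f t false))
  have hm : Function.Injective m := fun t t' h => (by simpa using f.injective h : _ ∧ _).1
  set τ := Tuple.sort m
  refine ⟨pairPerm τ fun s => pairOrient f (τ s), ⟨_, _, rfl⟩, ?_⟩
  rw [mem_pfPerms_iff]
  simp only [Perm.coe_mul, Function.comp_apply, pairPerm_apply]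
  exact ⟨fun s => apply_pairOrient_lt f (τ s),
    (Tuple.monotone_sort m).strictMono_of_injective (hm.comp τ.injective)⟩

lemma sum_signedPairProd_eq_card_smul_pfaffian {A : Matrix (Fin (2 * n)) (Fin (2 * n)) R}
    (hA : ∀ x y, A y x = -A x y) :
    ∑ f, signedPairProd A f = Nat.card (hyperoctahedral n) • pfaffian A := by
  classical
  have hprod : ∑ p ∈ pfPerms n ×ˢ (univ : Finset (hyperoctahedral n)),
      signedPairProd A (p.1 * p.2) = ∑ f, signedPairProd A f := by
    refine sum_nbij (fun p => p.1 * p.2) (fun _ _ => mem_univ _) ?_ ?_ (fun _ _ => rfl)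
    · rintro ⟨σ, g⟩ hσg ⟨σ', g'⟩ hσg' h
      simp only [coe_product, Set.mem_prod, mem_coe, mem_univ, and_true] at hσg hσg' h
      have hg : (g * g'⁻¹ : Perm (Fin (2 * n))) = 1 := by
        refine eq_one_of_mem_pfPerms_of_mul_mem hσg (mul_mem g.2 (inv_mem g'.2)) ?_
        simpa [← mul_assoc, h] using hσg'
      obtain rfl : g = g' := Subtype.ext (mul_inv_eq_one.mp hg)
      exact Prod.ext (mul_right_cancel h) rfl
    · intro f _
      obtain ⟨g, hg, hfg⟩ := exists_mul_mem_pfPerms f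
      exact ⟨(f * g, ⟨g, hg⟩⁻¹), by simpa using hfg, by simp⟩
  rw [← hprod, sum_product, pfaffian_eq_sum_signedPairProd, smul_sum]
  refine sum_congr rfl fun σ _ => ?_
  simp [signedPairProd_mul_of_mem hA, Nat.card_eq_fintype_card]

def pairSwap (n : ℕ) : Perm (Fin (2 * n)) := pairPerm 1 fun _ => swap false true

@[simp] lemma pairSwap_apply (t : Fin n) (b : Bool) :
    pairSwap n (finPairEquiv n (t, b)) = finPairEquiv n (t, !b) := by
  cases b <;> simp [pairSwap]

lemma pairSwap_ne (q : Fin (2 * n)) : pairSwap n q ≠ q := by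
  obtain ⟨⟨t, b⟩, rfl⟩ := (finPairEquiv n).surjective q
  simp

lemma mul_pairProd_update {A : Matrix α α R} (hA : ∀ x y, A y x = -A x y)
    (g : Fin (2 * n) → α) (q : Fin (2 * n)) (x : α) :
    A (g q) x * pairProd A g
      = A (g q) (g (pairSwap n q)) * pairProd A (Function.update g (pairSwap n q) x) := by
  obtain ⟨⟨t, b⟩, rfl⟩ := (finPairEquiv n).surjective q
  have hrest : ∏ s ∈ univ.erase t, A (Function.update g (finPairEquiv n (t, !b)) x
        (finPairEquiv n (s, false))) (Function.update g (finPairEquiv n (t, !b)) x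
        (finPairEquiv n (s, true)))
      = ∏ s ∈ univ.erase t, A (g (finPairEquiv n (s, false))) (g (finPairEquiv n (s, true))) :=
    prod_congr rfl fun s hs => by
      rw [Function.update_of_ne, Function.update_of_ne] <;> simp [ne_of_mem_erase hs]
  simp only [pairProd, pairSwap_apply, ← mul_prod_erase univ _ (mem_univ t), hrest]
  cases b
  · simp only [Bool.not_false, Function.update_self, ne_eq, EmbeddingLike.apply_eq_iff_eq,
      Prod.mk.injEq, Bool.false_eq_true, and_false, not_false_eq_true, Function.update_of_ne]
    ring
  · simp only [Bool.not_true, Function.update_self, ne_eq, EmbeddingLike.apply_eq_iff_eq,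
      Prod.mk.injEq, Bool.true_eq_false, and_false, not_false_eq_true, Function.update_of_ne]
    rw [hA (g (finPairEquiv n (t, false))), hA (g (finPairEquiv n (t, true))) x]
    ring

/-- If `π p = j` with `p ≠ 0`, exchange the values of `π` at `0` and at the partner of `p`;
if `π 0 = j` this is `π` itself. -/
def partnerSwap (j : Fin (2 * n + 1)) (π : Perm (Fin (2 * n + 1))) : Perm (Fin (2 * n + 1)) :=
  π * swap 0 (Fin.cases 0 (fun q => (pairSwap n q).succ) (π⁻¹ j))

lemma partnerSwap_of_apply_zero_eq {j : Fin (2 * n + 1)} {π : Perm (Fin (2 * n + 1))}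
    (h : π 0 = j) : partnerSwap j π = π := by
  simp [partnerSwap, ← h, Perm.one_def]

lemma exists_partnerSwap_eq {j : Fin (2 * n + 1)} {π : Perm (Fin (2 * n + 1))} (h : π 0 ≠ j) :
    ∃ q, π q.succ = j ∧ partnerSwap j π = π * swap 0 (pairSwap n q).succ := by
  obtain ⟨q, hq⟩ := Fin.exists_succ_eq.mpr fun h0 => h (Perm.inv_eq_iff_eq.mp h0).symm
  exact ⟨q, by simp [hq], by rw [partnerSwap, ← hq, Fin.cases_succ]⟩

lemma partnerSwap_partnerSwap (j : Fin (2 * n + 1)) (π : Perm (Fin (2 * n + 1))) :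
    partnerSwap j (partnerSwap j π) = π := by
  by_cases h : π 0 = j
  · rw [partnerSwap_of_apply_zero_eq h, partnerSwap_of_apply_zero_eq h]
  obtain ⟨q, hq, hπ⟩ := exists_partnerSwap_eq h
  have hinv : (partnerSwap j π)⁻¹ j = q.succ := by
    rw [Perm.inv_eq_iff_eq, hπ, Perm.mul_apply, swap_apply_of_ne_of_ne (Fin.succ_ne_zero q)
      (Fin.succ_injective _ |>.ne (pairSwap_ne q).symm), hq]
  rw [partnerSwap, hinv, Fin.cases_succ, hπ, mul_assoc, swap_mul_self, mul_one]

/-- `π 0` plays the role of the deleted index `i`, and `π ∘ Fin.succ` that of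
`i.succAbove ∘ f` for a permutation `f` of `Fin (2 * n)`. -/
def rowTerm (φ : Matrix (Fin (2 * n + 1)) (Fin (2 * n + 1)) R) (j : Fin (2 * n + 1))
    (π : Perm (Fin (2 * n + 1))) : R :=
  (sign π : ℤ) • (φ j (π 0) * pairProd φ (π ∘ Fin.succ))

lemma rowTerm_add_rowTerm_partnerSwap {φ : Matrix (Fin (2 * n + 1)) (Fin (2 * n + 1)) R}
    (hφ : ∀ x y, φ y x = -φ x y) (hdiag : ∀ x, φ x x = 0) (j : Fin (2 * n + 1))
    (π : Perm (Fin (2 * n + 1))) : rowTerm φ j π + rowTerm φ j (partnerSwap j π) = 0 := by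
  by_cases h : π 0 = j
  · simp [partnerSwap_of_apply_zero_eq h, rowTerm, h, hdiag]
  obtain ⟨q, hq, hπ⟩ := exists_partnerSwap_eq h
  have hupdate : (π * swap 0 (pairSwap n q).succ) ∘ Fin.succ
      = Function.update (π ∘ Fin.succ) (pairSwap n q) (π 0) := by
    funext x
    by_cases hx : x = pairSwap n q
    · simp [hx]
    · simp [hx, swap_apply_of_ne_of_ne (Fin.succ_ne_zero x) (Fin.succ_injective _ |>.ne hx)]
  have key := mul_pairProd_update hφ (π ∘ Fin.succ) q (π 0)
  simp only [Function.comp_apply, hq] at key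
  rw [rowTerm, rowTerm, hπ, hupdate, Perm.mul_apply, swap_apply_left, map_mul,
    sign_swap (Fin.succ_ne_zero _).symm, key]
  simp

lemma sum_rowTerm_eq_zero {φ : Matrix (Fin (2 * n + 1)) (Fin (2 * n + 1)) R}
    (hφ : ∀ x y, φ y x = -φ x y) (hdiag : ∀ x, φ x x = 0) (j : Fin (2 * n + 1)) :
    ∑ π, rowTerm φ j π = 0 := by
  refine sum_ninvolution (partnerSwap j) (rowTerm_add_rowTerm_partnerSwap hφ hdiag j) ?_
    (fun _ => mem_univ _) (partnerSwap_partnerSwap j)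
  intro π hπ
  have h : π 0 ≠ j := fun h => hπ (by simp [rowTerm, h, hdiag])
  obtain ⟨q, -, hπ⟩ := exists_partnerSwap_eq h
  rw [hπ, Ne, mul_eq_left, swap_eq_one_iff]
  exact (Fin.succ_ne_zero _).symm

def insertPerm (i : Fin (N + 1)) (f : Perm (Fin N)) : Perm (Fin (N + 1)) :=
  i.cycleRange⁻¹ * decomposeFin.symm (0, f)

@[simp] lemma insertPerm_zero (i : Fin (N + 1)) (f : Perm (Fin N)) : insertPerm i f 0 = i := by
  simp [insertPerm]

@[simp] lemma insertPerm_succ (i : Fin (N + 1)) (f : Perm (Fin N)) (q : Fin N) :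
    insertPerm i f q.succ = i.succAbove (f q) := by
  simp [insertPerm, decomposeFin_symm_apply_succ, Fin.cycleRange_symm_succ]

lemma sign_insertPerm (i : Fin (N + 1)) (f : Perm (Fin N)) :
    sign (insertPerm i f) = (-1) ^ (i : ℕ) * sign f := by
  simp [insertPerm, Fin.sign_cycleRange, decomposeFin.symm_sign]

lemma bijective_insertPerm :
    Function.Bijective fun p : Fin (N + 1) × Perm (Fin N) => insertPerm p.1 p.2 := by
  refine (Fintype.bijective_iff_injective_and_card _).mpr ⟨?_, ?_⟩
  · rintro ⟨i, f⟩ ⟨i', f'⟩ h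
    have hi : i = i' := by simpa using congrArg (· 0) h
    subst hi
    obtain ⟨-, rfl⟩ := Prod.mk.inj (decomposeFin.symm.injective (mul_left_cancel h))
    rfl
  · simp [Fintype.card_perm, Nat.factorial_succ]

lemma rowTerm_insertPerm (φ : Matrix (Fin (2 * n + 1)) (Fin (2 * n + 1)) R)
    (j i : Fin (2 * n + 1)) (f : Perm (Fin (2 * n))) :
    rowTerm φ j (insertPerm i f)
      = φ j i * ((-1) ^ (i : ℕ) * signedPairProd (φ.submatrix i.succAbove i.succAbove) f) := by
  have hcomp : insertPerm i f ∘ Fin.succ = i.succAbove ∘ f := funext (insertPerm_succ i f)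
  rw [rowTerm, signedPairProd, pairProd_submatrix, sign_insertPerm, insertPerm_zero, hcomp]
  simp only [zsmul_eq_mul]
  push_cast
  ring

lemma sum_rowTerm (φ : Matrix (Fin (2 * n + 1)) (Fin (2 * n + 1)) R) (j : Fin (2 * n + 1)) :
    ∑ π, rowTerm φ j π = ∑ i, φ j i *
      ((-1) ^ (i : ℕ) * ∑ f, signedPairProd (φ.submatrix i.succAbove i.succAbove) f) := by
  rw [← Fintype.sum_bijective _ bijective_insertPerm _ _ fun _ => rfl, Fintype.sum_prod_type]
  simp only [rowTerm_insertPerm, mul_sum]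

noncomputable def signedSubPfaffians (φ : Matrix (Fin (2 * n + 1)) (Fin (2 * n + 1)) R) :
    Fin (2 * n + 1) → R :=
  fun i => (-1) ^ (i : ℕ) * pfaffian (φ.submatrix i.succAbove i.succAbove)

lemma card_smul_mulVec_signedSubPfaffians_eq_zero
    {φ : Matrix (Fin (2 * n + 1)) (Fin (2 * n + 1)) R} (hφ : ∀ x y, φ y x = -φ x y)
    (hdiag : ∀ x, φ x x = 0) :
    Nat.card (hyperoctahedral n) • φ.mulVec (signedSubPfaffians φ) = 0 := by
  ext j
  rw [Pi.smul_apply, Pi.zero_apply, ← sum_rowTerm_eq_zero hφ hdiag j, sum_rowTerm, Matrix.mulVec,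
    dotProduct, smul_sum]
  refine sum_congr rfl fun i _ => ?_
  rw [sum_signedPairProd_eq_card_smul_pfaffian (A := φ.submatrix i.succAbove i.succAbove)
    fun x y => hφ _ _, signedSubPfaffians, mul_smul_comm, mul_smul_comm]

lemma RingHom.map_pfaffian (g : R →+* S) (A : Matrix (Fin (2 * n)) (Fin (2 * n)) R) :
    g (pfaffian A) = pfaffian (A.map g) := by
  simp [pfaffian, map_sum, map_prod]

lemma RingHom.comp_signedSubPfaffians (g : R →+* S)
    (φ : Matrix (Fin (2 * n + 1)) (Fin (2 * n + 1)) R) :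
    g ∘ signedSubPfaffians φ = signedSubPfaffians (φ.map g) := by
  ext i
  simp [signedSubPfaffians, g.map_pfaffian, Matrix.submatrix_map]

noncomputable def genericAlt (N : ℕ) :
    Matrix (Fin N) (Fin N) (MvPolynomial (Fin N × Fin N) ℤ) :=
  Matrix.of fun x y => .X (x, y) - .X (y, x)

lemma exists_map_genericAlt_eq {φ : Matrix (Fin N) (Fin N) R}
    (hφ : ∀ x y, φ y x = -φ x y) (hdiag : ∀ x, φ x x = 0) :
    ∃ g : MvPolynomial (Fin N × Fin N) ℤ →+* R, (genericAlt N).map g = φ := by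
  refine ⟨MvPolynomial.eval₂Hom (Int.castRingHom R)
    fun p => if p.1 < p.2 then φ p.1 p.2 else 0, ?_⟩
  ext x y
  rcases lt_trichotomy x y with h | rfl | h
  · simp [genericAlt, h, h.not_gt]
  · simp [genericAlt, hdiag]
  · simp [genericAlt, h, h.not_gt, hφ y x]

lemma genericAlt_mulVec_signedSubPfaffians :
    (genericAlt (2 * n + 1)).mulVec (signedSubPfaffians (genericAlt (2 * n + 1))) = 0 := by
  refine nsmul_right_injective (Nat.card_pos (α := hyperoctahedral n)).ne' ?_
  simp only [smul_zero]
  exact card_smul_mulVec_signedSubPfaffians_eq_zero (by simp [genericAlt]) (by simp [genericAlt])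

end

variable {R : Type*} [CommRing R]

/-- For a `(2n+1) x (2n+1)` alternating matrix `φ`, the vector of signed maximal
principal Pfaffians `Y i = (-1)^i * Pf(φ(i))` (zero-based indexing, corresponding to
`(-1)^(i+1)` in one-based indexing), where `φ(i)` deletes row and column `i`,
satisfies `φ · Y = 0`. -/
theorem alternating_mulVec_pfaffians_eq_zero
    {R : Type*} [CommRing R] {n : ℕ} (φ : Matrix (Fin (2*n+1)) (Fin (2*n+1)) R)
    (halt : φ.transpose = -φ) (hdiag : ∀ i, φ i i = 0) :
    φ.mulVec (fun (i : Fin (2*n+1)) => (-1 : R) ^ (i : ℕ) * pfaffian (φ.submatrix i.succAbove i.succAbove)) = 0 := by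
  obtain ⟨g, rfl⟩ := exists_map_genericAlt_eq (φ := φ) (fun x y => congrFun₂ halt x y) hdiag
  change ((genericAlt _).map g).mulVec (signedSubPfaffians ((genericAlt _).map g)) = 0
  ext j
  rw [← g.comp_signedSubPfaffians, ← RingHom.map_mulVec, genericAlt_mulVec_signedSubPfaffians,
    Pi.zero_apply, map_zero, Pi.zero_apply]
end

section
/- The Pfaffian of a 2n×2n alternating matrix φ satisfies the expansion along the first row: Pf(φ) = Σ_{j=2}^{2n} (-1)^j φ_{1,j} Pf(φ(1,j)), where φ(1,j) is obtained from φ by deleting rows and columns 1 and j. -/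
variable {R : Type*} [CommRing R]

/-- The order-embedding of `Fin (2*n)` onto the complement of two distinct indices
`i ≠ j` in `Fin (2*(n+1))`; used to delete rows/columns `i` and `j`. -/
noncomputable def delTwo {n : ℕ} (i j : Fin (2*(n+1))) (h : i ≠ j) :
    Fin (2*n) ↪o Fin (2*(n+1)) :=
  ({i, j}ᶜ : Finset (Fin (2*(n+1)))).orderEmbOfFin
    (by rw [Finset.card_compl, Finset.card_pair h, Fintype.card_fin]; omega)

/-!
In a normalized matching `σ` the pair at positions `0, 1` is the one containing the smallest
index, so `σ 0 = 0` and `σ 1 = j + 1` for some `j`; the other `n` pairs form a normalized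
matching `τ` of the `2n` remaining indices, relabelled order-preservingly by `delTwo 0 (j + 1)`.
As permutations, `σ` is `τ` shifted past two fixed points and then composed with the cycle
sending `1, …, j + 1` to `j + 1, 1, …, j`, so `sign σ = (-1) ^ j * sign τ`. The bijection
`(j, τ) ↦ σ` turns the Pfaffian sum into the expansion along the first row.
-/

open Equiv Equiv.Perm

theorem Equiv.Perm.exists_decomposeFin_symm_zero_eq {m : ℕ} (σ : Perm (Fin (m+1)))
    (h : σ 0 = 0) : ∃ τ : Perm (Fin m), decomposeFin.symm (0, τ) = σ := by
  obtain ⟨⟨p, τ⟩, rfl⟩ := decomposeFin.symm.surjective σ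
  rw [decomposeFin_symm_apply_zero] at h
  exact ⟨τ, h ▸ rfl⟩

namespace Pfaffian

variable {n : ℕ}

theorem delTwo_zero_succ_apply (j : Fin (2*n+1)) (k : Fin (2*n)) :
    delTwo 0 j.succ (Fin.succ_ne_zero j).symm k = (j.succAbove k).succ := by
  have hmem : ∀ k, (j.succAbove k).succ ∈ ({0, j.succ}ᶜ : Finset (Fin (2*(n+1)))) := by
    intro k
    simp [Fin.succ_ne_zero, Fin.succAbove_ne]
  exact congrFun (Finset.orderEmbOfFin_unique _ hmem
    (Fin.strictMono_succ.comp (Fin.strictMono_succAbove j))).symm k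

theorem mk_two_mul_zero (h : 2 * ((0 : Fin (n+1)) : ℕ) < 2*(n+1)) :
    (⟨2 * ((0 : Fin (n+1)) : ℕ), h⟩ : Fin (2*(n+1))) = 0 :=
  Fin.ext (by simp)

theorem mk_two_mul_zero_add_one (h : 2 * ((0 : Fin (n+1)) : ℕ) + 1 < 2*(n+1)) :
    (⟨2 * ((0 : Fin (n+1)) : ℕ) + 1, h⟩ : Fin (2*(n+1))) = 1 :=
  Fin.ext (by simp [Nat.mod_eq_of_lt (show 1 < 2*(n+1) by omega)])

theorem mk_two_mul_succ (i : Fin n) (h : 2 * (i.succ : ℕ) < 2*(n+1)) :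
    (⟨2 * (i.succ : ℕ), h⟩ : Fin (2*(n+1))) = (⟨2 * i, by omega⟩ : Fin (2*n)).succ.succ :=
  Fin.ext (by simp; ring)

theorem mk_two_mul_succ_add_one (i : Fin n) (h : 2 * (i.succ : ℕ) + 1 < 2*(n+1)) :
    (⟨2 * (i.succ : ℕ) + 1, h⟩ : Fin (2*(n+1))) =
      (⟨2 * i + 1, by omega⟩ : Fin (2*n)).succ.succ :=
  Fin.ext (by simp; ring)

/-- The matching pairing `0` with `j + 1` and the other indices as `τ` pairs `0, …, 2n - 1`
after relabelling them by `delTwo 0 (j + 1)`. -/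
noncomputable def consPerm (j : Fin (2*n+1)) (τ : Perm (Fin (2*n))) :
    Perm (Fin (2*(n+1))) :=
  decomposeFin.symm (0, j.cycleRange.symm * decomposeFin.symm (0, τ))

section consPerm

variable (j : Fin (2*n+1)) (τ : Perm (Fin (2*n)))

@[simp]
theorem consPerm_zero : consPerm j τ 0 = 0 := by
  simp [consPerm, decomposeFin_symm_apply_zero]

@[simp]
theorem consPerm_one : consPerm j τ 1 = j.succ := by
  rw [consPerm, decomposeFin_symm_apply_one]
  simp [Fin.cycleRange_symm_zero]

@[simp]
theorem consPerm_succ_succ (k : Fin (2*n)) :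
    consPerm j τ k.succ.succ = (j.succAbove (τ k)).succ := by
  rw [consPerm, decomposeFin_symm_apply_succ]
  simp [decomposeFin_symm_apply_succ, Fin.cycleRange_symm_succ]

theorem sign_consPerm : sign (consPerm j τ) = (-1) ^ (j : ℕ) * sign τ := by
  simp [consPerm, decomposeFin.symm_sign, Fin.sign_cycleRange]

theorem consPerm_mem_pfPerms_iff : consPerm j τ ∈ pfPerms (n+1) ↔ τ ∈ pfPerms n := by
  simp only [pfPerms, Finset.mem_filter, Finset.mem_univ, true_and, Fin.forall_fin_succ,
    mk_two_mul_zero, mk_two_mul_zero_add_one, mk_two_mul_succ, mk_two_mul_succ_add_one,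
    consPerm_zero, consPerm_one, consPerm_succ_succ, Fin.succ_lt_succ_iff,
    (Fin.strictMono_succAbove j).lt_iff_lt]
  simp [Fin.succ_pos]

end consPerm

theorem consPerm_inj {j j' : Fin (2*n+1)} {τ τ' : Perm (Fin (2*n))} :
    consPerm j τ = consPerm j' τ' ↔ j = j' ∧ τ = τ' := by
  refine ⟨fun h => ?_, fun ⟨hj, hτ⟩ => hj ▸ hτ ▸ rfl⟩
  obtain rfl : j = j' := Fin.succ_injective _ (by simpa using congr($h 1))
  have hρ := congrArg Prod.snd (decomposeFin.symm.injective h)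
  exact ⟨rfl, congrArg Prod.snd (decomposeFin.symm.injective (mul_left_cancel hρ))⟩

theorem apply_zero_of_mem_pfPerms {σ : Perm (Fin (2*(n+1)))} (hσ : σ ∈ pfPerms (n+1)) :
    σ 0 = 0 := by
  simp only [pfPerms, Finset.mem_filter, Finset.mem_univ, true_and] at hσ
  obtain ⟨hpair, hfst⟩ := hσ
  have hfst_le : ∀ q : Fin (n+1), σ 0 ≤ σ ⟨2 * q, by omega⟩ := by
    refine Fin.cases (le_of_eq (by rw [mk_two_mul_zero])) fun q => ?_
    rw [← mk_two_mul_zero (by omega)]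
    exact (hfst 0 q.succ (Fin.succ_pos q)).le
  have hle : ∀ x, σ 0 ≤ σ x := by
    rintro ⟨v, hv⟩
    obtain ⟨q, rfl | rfl⟩ := Nat.even_or_odd' v
    · exact hfst_le ⟨q, by omega⟩
    · exact (hfst_le ⟨q, by omega⟩).trans (hpair ⟨q, by omega⟩).le
  simpa using hle (σ.symm 0)

theorem exists_consPerm_eq {σ : Perm (Fin (2*(n+1)))} (hσ : σ ∈ pfPerms (n+1)) :
    ∃ j τ, consPerm j τ = σ := by
  obtain ⟨ρ, rfl⟩ := exists_decomposeFin_symm_zero_eq σ (apply_zero_of_mem_pfPerms hσ)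
  obtain ⟨τ, hτ⟩ := exists_decomposeFin_symm_zero_eq ((ρ 0).cycleRange * ρ)
    (by simp [Fin.cycleRange_self])
  refine ⟨ρ 0, τ, ?_⟩
  rw [consPerm, hτ, ← Perm.inv_def, inv_mul_cancel_left]

noncomputable def pfaffianTerm (A : Matrix (Fin (2*n)) (Fin (2*n)) R)
    (σ : Perm (Fin (2*n))) : R :=
  (sign σ : ℤ) • ∏ i : Fin n, A (σ ⟨2*i, by omega⟩) (σ ⟨2*i+1, by omega⟩)

theorem pfaffian_eq_sum_pfaffianTerm (A : Matrix (Fin (2*n)) (Fin (2*n)) R) :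
    pfaffian A = ∑ σ ∈ pfPerms n, pfaffianTerm A σ :=
  rfl

theorem pfaffianTerm_consPerm (A : Matrix (Fin (2*(n+1))) (Fin (2*(n+1))) R)
    (j : Fin (2*n+1)) (τ : Perm (Fin (2*n))) :
    pfaffianTerm A (consPerm j τ) = (-1) ^ (j : ℕ) * A 0 j.succ *
      pfaffianTerm (A.submatrix (delTwo 0 j.succ (Fin.succ_ne_zero j).symm)
        (delTwo 0 j.succ (Fin.succ_ne_zero j).symm)) τ := by
  simp only [pfaffianTerm, Fin.prod_univ_succ, mk_two_mul_zero, mk_two_mul_zero_add_one,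
    mk_two_mul_succ, mk_two_mul_succ_add_one, consPerm_zero, consPerm_one, consPerm_succ_succ,
    Matrix.submatrix_apply, delTwo_zero_succ_apply, sign_consPerm, zsmul_eq_mul]
  push_cast
  ring

end Pfaffian

open Pfaffian in
/-- Indices are zero-based: the summand for `j` is the informal term for column `j + 2`. -/
theorem pfaffian_expansion_first_row_general
    {R : Type*} [CommRing R] {n : ℕ} (φ : Matrix (Fin (2*(n+1))) (Fin (2*(n+1))) R) :
    pfaffian φ = ∑ j : Fin (2*n+1),
      (-1 : R) ^ (j : ℕ) * φ 0 j.succ *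
        pfaffian (φ.submatrix (delTwo 0 j.succ (Fin.succ_ne_zero j).symm)
          (delTwo 0 j.succ (Fin.succ_ne_zero j).symm)) := by
  simp only [pfaffian_eq_sum_pfaffianTerm, Finset.mul_sum, ← pfaffianTerm_consPerm,
    ← Finset.sum_product']
  refine (Finset.sum_bij (fun x _ => consPerm x.1 x.2) ?_ ?_ ?_ fun _ _ => rfl).symm
  · rintro ⟨j, τ⟩ hτ
    exact (consPerm_mem_pfPerms_iff j τ).2 (Finset.mem_product.1 hτ).2
  · rintro ⟨j, τ⟩ - ⟨j', τ'⟩ - h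
    exact Prod.ext_iff.2 (consPerm_inj.1 h)
  · intro σ hσ
    obtain ⟨j, τ, rfl⟩ := exists_consPerm_eq hσ
    exact ⟨(j, τ), Finset.mem_product.2 ⟨Finset.mem_univ j,
      (consPerm_mem_pfPerms_iff j τ).1 hσ⟩, rfl⟩

/-- Expansion of the Pfaffian of a `2n x 2n` alternating matrix along the first row:
`Pf(φ) = Σ_{j=2}^{2n} (-1)^j φ_{1,j} Pf(φ(1,j))` (one-based indexing; here stated
zero-based, with `φ(0, j)` the submatrix deleting rows and columns `0` and `j`). -/
theorem pfaffian_expansion_first_row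
    {R : Type*} [CommRing R] {n : ℕ} (φ : Matrix (Fin (2*(n+1))) (Fin (2*(n+1))) R)
    (halt : φ.transpose = -φ) (hdiag : ∀ i, φ i i = 0) :
    pfaffian φ = ∑ j : Fin (2*n+1),
      (-1 : R) ^ (j : ℕ) * φ 0 j.succ *
        pfaffian (φ.submatrix (delTwo 0 j.succ (Fin.succ_ne_zero j).symm)
          (delTwo 0 j.succ (Fin.succ_ne_zero j).symm)) :=
  pfaffian_expansion_first_row_general φ
end
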